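/- arXiv:1912.02882 — 4 statements merged into one kernel-verified Lean document; each statement's English description precedes it below -/
import Mathlib

section
/- For any n×n complex matrix X and each j = 1,…,n, σ_j(X) + σ_{n−j+1}(I−X) ≥ 1, where σ_k denotes the k-th largest singular value. -/
open Matrix
open scoped ComplexOrder

noncomputable def eigDesc {n : ℕ} {A : Matrix (Fin n) (Fin n) ℂ} (hA : A.IsHermitian)
    (j : Fin n) : ℝ :=
  (hA.eigenvalues ∘ Tuple.sort hA.eigenvalues) j.rev

noncomputable def singVal {n : ℕ} (A : Matrix (Fin n) (Fin n) ℂ) (j : Fin n) : ℝ :=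
  Real.sqrt (eigDesc ((Matrix.posSemidef_conjTranspose_mul_self A).isHermitian) j)

noncomputable def hermPart {n : ℕ} (X : Matrix (Fin n) (Fin n) ℂ) :
    Matrix (Fin n) (Fin n) ℂ :=
  (1/2 : ℂ) • (X + Xᴴ)

lemma hermPart_isHermitian {n : ℕ} (X : Matrix (Fin n) (Fin n) ℂ) :
    (hermPart X).IsHermitian := by
  unfold hermPart
  simp [Matrix.IsHermitian, Matrix.conjTranspose_smul, Matrix.conjTranspose_add, add_comm]

/-!
Courant–Fischer in its elementary form. The eigenvectors of `Xᴴ * X` whose eigenvalues are at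
most `σ_j(X)²` span a subspace of dimension at least `n - j` (indices start at `0`) on which
`‖X v‖ ≤ σ_j(X) ‖v‖`. The same subspace for `1 - X` and the index `n - 1 - j` has dimension at
least `j + 1`, so the two meet in some `v ≠ 0`, and then
`‖v‖ ≤ ‖X v‖ + ‖(1 - X) v‖ ≤ (σ_j(X) + σ_{n-1-j}(1 - X)) ‖v‖`.
-/

open Module Submodule InnerProductSpace RCLike

section Spectral

variable {𝕜 E ι : Type*} [RCLike 𝕜] [NormedAddCommGroup E] [InnerProductSpace 𝕜 E] [Fintype ι]

lemma OrthonormalBasis.finrank_span_image (b : OrthonormalBasis ι 𝕜 E) (s : Finset ι) :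
    finrank 𝕜 (span 𝕜 (b '' s)) = s.card := by
  have hli := b.orthonormal.linearIndependent.comp ((↑) : s → ι) Subtype.val_injective
  rw [Set.image_eq_range, ← Fintype.card_coe]
  exact finrank_span_eq_card hli

lemma OrthonormalBasis.inner_eq_zero_of_mem_span_image (b : OrthonormalBasis ι 𝕜 E)
    {s : Set ι} {i : ι} (hi : i ∉ s) {v : E} (hv : v ∈ span 𝕜 (b '' s)) : ⟪b i, v⟫_𝕜 = 0 := by
  suffices span 𝕜 (b '' s) ≤ (𝕜 ∙ b i)ᗮ from mem_orthogonal_singleton_iff_inner_right.mp (this hv)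
  rw [span_le]
  rintro _ ⟨k, hk, rfl⟩
  exact mem_orthogonal_singleton_iff_inner_right.mpr
    (b.inner_eq_zero (ne_of_mem_of_not_mem hk hi).symm)

variable {T : E →ₗ[𝕜] E} {b : OrthonormalBasis ι 𝕜 E} {μ : ι → ℝ}

lemma LinearMap.IsSymmetric.re_inner_apply_self_eq_sum (hT : T.IsSymmetric)
    (hb : ∀ i, T (b i) = (μ i : 𝕜) • b i) (v : E) :
    re ⟪T v, v⟫_𝕜 = ∑ i, μ i * ‖⟪b i, v⟫_𝕜‖ ^ 2 := by
  rw [← b.sum_inner_mul_inner, map_sum]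
  refine Finset.sum_congr rfl fun i _ => ?_
  rw [hT, hb, inner_smul_right, ← inner_conj_symm v (b i), mul_assoc, RCLike.conj_mul, ← ofReal_pow,
    ← ofReal_mul, ofReal_re]

lemma LinearMap.IsSymmetric.re_inner_apply_self_le (hT : T.IsSymmetric)
    (hb : ∀ i, T (b i) = (μ i : 𝕜) • b i) {c : ℝ} {v : E}
    (hv : ∀ i, c < μ i → ⟪b i, v⟫_𝕜 = 0) :
    re ⟪T v, v⟫_𝕜 ≤ c * ‖v‖ ^ 2 := by
  rw [hT.re_inner_apply_self_eq_sum hb, ← b.sum_sq_norm_inner_right, Finset.mul_sum]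
  refine Finset.sum_le_sum fun i _ => ?_
  rcases le_or_gt (μ i) c with hle | hlt
  · exact mul_le_mul_of_nonneg_right hle (sq_nonneg _)
  · simp [hv i hlt]

end Spectral

section Matrix

variable {𝕜 m ι : Type*} [RCLike 𝕜] [Fintype ι] [DecidableEq ι]

lemma Matrix.IsHermitian.toEuclideanLin_eigenvectorBasis {A : Matrix ι ι 𝕜} (hA : A.IsHermitian)
    (i : ι) :
    toEuclideanLin A (hA.eigenvectorBasis i) = (hA.eigenvalues i : 𝕜) • hA.eigenvectorBasis i := by
  rw [toLpLin_apply, hA.mulVec_eigenvectorBasis, RCLike.real_smul_eq_coe_smul (K := 𝕜)]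
  rfl

lemma Matrix.re_inner_toEuclideanLin_conjTranspose_mul_self [Fintype m] [DecidableEq m]
    (X : Matrix m ι 𝕜) (v : EuclideanSpace 𝕜 ι) :
    re ⟪toEuclideanLin (Xᴴ * X) v, v⟫_𝕜 = ‖toEuclideanLin X v‖ ^ 2 := by
  rw [toLpLin_mul (q := 2), toEuclideanLin_conjTranspose_eq_adjoint, LinearMap.comp_apply,
    LinearMap.adjoint_inner_left, inner_self_eq_norm_sq]

end Matrix

lemma Tuple.succ_le_card_filter_le_sort {n : ℕ} {α : Type*} [LinearOrder α] (f : Fin n → α)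
    (k : Fin n) : k.val + 1 ≤ (Finset.univ.filter fun i => f i ≤ f (Tuple.sort f k)).card := by
  have hsub : (Finset.Iic k).image (Tuple.sort f) ⊆
      Finset.univ.filter fun i => f i ≤ f (Tuple.sort f k) := by
    intro i hi
    obtain ⟨m, hm, rfl⟩ := Finset.mem_image.mp hi
    simpa using Tuple.monotone_sort f (Finset.mem_Iic.mp hm)
  simpa [Finset.card_image_of_injective _ (Tuple.sort f).injective] using Finset.card_le_card hsub

lemma Submodule.exists_mem_inf_ne_zero_of_finrank_lt {K V : Type*} [DivisionRing K] [AddCommGroup V]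
    [Module K V] [FiniteDimensional K V] {s t : Submodule K V}
    (h : finrank K V < finrank K s + finrank K t) : ∃ v ∈ s ⊓ t, v ≠ 0 := by
  by_contra! hst
  have hdisj : Disjoint s t := disjoint_def.mpr fun v hs ht => hst v ⟨hs, ht⟩
  exact h.not_ge (finrank_add_finrank_le_of_disjoint hdisj)

lemma exists_finrank_ge_norm_toEuclideanLin_le_singVal {n : ℕ} (X : Matrix (Fin n) (Fin n) ℂ)
    (j : Fin n) : ∃ V : Submodule ℂ (EuclideanSpace ℂ (Fin n)), n - j ≤ finrank ℂ V ∧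
      ∀ v ∈ V, ‖toEuclideanLin X v‖ ≤ singVal X j * ‖v‖ := by
  set hA := (posSemidef_conjTranspose_mul_self X).isHermitian
  set c := eigDesc hA j
  set s := Finset.univ.filter fun i => hA.eigenvalues i ≤ c
  refine ⟨span ℂ (hA.eigenvectorBasis '' s), ?_, fun v hv => ?_⟩
  · have hcard : j.rev.val + 1 ≤ s.card :=
      Tuple.succ_le_card_filter_le_sort hA.eigenvalues j.rev
    rw [Fin.val_rev] at hcard
    rw [hA.eigenvectorBasis.finrank_span_image]
    omega
  · have hsq : ‖toEuclideanLin X v‖ ^ 2 ≤ c * ‖v‖ ^ 2 := by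
      rw [← re_inner_toEuclideanLin_conjTranspose_mul_self]
      refine (isSymmetric_toEuclideanLin_iff.mpr hA).re_inner_apply_self_le
        hA.toEuclideanLin_eigenvectorBasis fun i hi => ?_
      exact hA.eigenvectorBasis.inner_eq_zero_of_mem_span_image (by simpa [s] using hi) hv
    calc ‖toEuclideanLin X v‖ ≤ √(c * ‖v‖ ^ 2) := Real.le_sqrt_of_sq_le hsq
      _ = singVal X j * ‖v‖ := by
        rw [Real.sqrt_mul' _ (sq_nonneg _), Real.sqrt_sq (norm_nonneg _)]
        rfl

theorem stmt5 {n : ℕ} (X : Matrix (Fin n) (Fin n) ℂ) (j : Fin n) :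
    1 ≤ singVal X j + singVal (1 - X) j.rev := by
  obtain ⟨V, hV, hXV⟩ := exists_finrank_ge_norm_toEuclideanLin_le_singVal X j
  obtain ⟨W, hW, hXW⟩ := exists_finrank_ge_norm_toEuclideanLin_le_singVal (1 - X) j.rev
  obtain ⟨v, ⟨hvV, hvW⟩, hv⟩ : ∃ v ∈ V ⊓ W, v ≠ 0 := by
    refine exists_mem_inf_ne_zero_of_finrank_lt ?_
    rw [finrank_euclideanSpace_fin, Fin.val_rev] at *
    omega
  have hsplit : toEuclideanLin X v + toEuclideanLin (1 - X) v = v := by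
    rw [← LinearMap.add_apply, ← map_add, add_sub_cancel, toLpLin_one, LinearMap.id_apply]
  refine le_of_mul_le_mul_right ?_ (norm_pos_iff.mpr hv)
  calc 1 * ‖v‖ = ‖toEuclideanLin X v + toEuclideanLin (1 - X) v‖ := by rw [one_mul, hsplit]
    _ ≤ singVal X j * ‖v‖ + singVal (1 - X) j.rev * ‖v‖ :=
      (norm_add_le _ _).trans (add_le_add (hXV v hvV) (hXW v hvW))
    _ = (singVal X j + singVal (1 - X) j.rev) * ‖v‖ := by ring
end

section
/- Let A be an n×n strict contraction with singular values r_1 ≥ … ≥ r_n. Then for each j = 1,…,n, the j-th largest eigenvalue of Re((I−A)⁻¹) is at most 1/(1−r_j). -/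
open Matrix
open scoped ComplexOrder

/-!
Write `B = (1 - A)⁻¹` and let `λ > 0` be the `j`-th largest eigenvalue of `Re B`. On the span `S`
of the top `j + 1` eigenvectors of `Re B` we have `λ ‖x‖² ≤ Re ⟪x, B x⟫`. For `y = B x` this reads
`λ ‖x‖² ≤ Re ⟪x, y⟫` with `x = y - A y`, so Cauchy–Schwarz gives `λ ‖x‖ ≤ ‖y‖` and hence
`‖A y‖ ≥ ‖y‖ - ‖x‖ ≥ (1 - λ⁻¹) ‖y‖` on the `(j + 1)`-dimensional space `B S`. By the min-max
principle, `(1 - λ⁻¹)² ≤ λ_j(A* A) = r_j²`, which rearranges to `λ ≤ 1 / (1 - r_j)`.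
-/

open Module RCLike
open scoped InnerProductSpace

section

variable {𝕜 E : Type*} [RCLike 𝕜] [NormedAddCommGroup E] [InnerProductSpace 𝕜 E]

theorem one_sub_inv_mul_norm_le_norm_sub {x y : E} {c : ℝ} (hc : 0 < c)
    (h : c * ‖x‖ ^ 2 ≤ re ⟪x, y⟫_𝕜) : (1 - c⁻¹) * ‖y‖ ≤ ‖y - x‖ := by
  have hx : c * ‖x‖ ≤ ‖y‖ := by
    rcases (norm_nonneg x).eq_or_lt with hx0 | hx0
    · rw [← hx0, mul_zero]
      exact norm_nonneg y
    · have := h.trans (re_inner_le_norm x y)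
      nlinarith
  calc (1 - c⁻¹) * ‖y‖ = ‖y‖ - c⁻¹ * ‖y‖ := by ring
    _ ≤ ‖y‖ - ‖x‖ := by
        gcongr
        rw [inv_mul_eq_div, le_div_iff₀ hc]
        linarith
    _ ≤ ‖y - x‖ := norm_sub_norm_le y x

namespace OrthonormalBasis

variable {ι : Type*} [Fintype ι] (b : OrthonormalBasis ι 𝕜 E)

theorem inner_eq_zero_of_mem_span_image_s8 {s : Set ι} {x : E}
    (hx : x ∈ Submodule.span 𝕜 (b '' s)) {i : ι} (hi : i ∉ s) : ⟪b i, x⟫_𝕜 = 0 := by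
  refine Submodule.mem_orthogonal_singleton_iff_inner_right.1 (Submodule.span_le.2 ?_ hx)
  rintro _ ⟨k, hk, rfl⟩
  exact Submodule.mem_orthogonal_singleton_iff_inner_right.2
    (b.orthonormal.2 fun hik => hi (hik ▸ hk))

theorem finrank_span_image_s8 (s : Finset ι) :
    finrank 𝕜 (Submodule.span 𝕜 (b '' s)) = s.card := by
  have hli := b.toBasis.linearIndependent.comp (Subtype.val : s → ι) Subtype.val_injective
  rw [OrthonormalBasis.coe_toBasis] at hli
  rw [← Fintype.card_coe s, ← finrank_span_eq_card hli, Set.range_comp,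
    Subtype.range_coe_subtype]
  rfl

end OrthonormalBasis

namespace LinearMap.IsSymmetric

variable [FiniteDimensional 𝕜 E] {T : E →ₗ[𝕜] E} (hT : T.IsSymmetric) {n : ℕ}
  (hn : finrank 𝕜 E = n)

theorem re_inner_apply_eq_sum (x : E) :
    re ⟪x, T x⟫_𝕜 = ∑ i, hT.eigenvalues hn i * ‖⟪hT.eigenvectorBasis hn i, x⟫_𝕜‖ ^ 2 := by
  rw [← (hT.eigenvectorBasis hn).repr.inner_map_map, PiLp.inner_apply, map_sum]
  refine Finset.sum_congr rfl fun i _ => ?_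
  rw [eigenvectorBasis_apply_self_apply, inner_apply, mul_assoc, mul_conj,
    OrthonormalBasis.repr_apply_apply]
  norm_cast

theorem mul_norm_sq_le_re_inner_of_mem_span {s : Set (Fin n)} {c : ℝ}
    (hc : ∀ i ∈ s, c ≤ hT.eigenvalues hn i) {x : E}
    (hx : x ∈ Submodule.span 𝕜 (hT.eigenvectorBasis hn '' s)) :
    c * ‖x‖ ^ 2 ≤ re ⟪x, T x⟫_𝕜 := by
  rw [hT.re_inner_apply_eq_sum hn, ← (hT.eigenvectorBasis hn).sum_sq_norm_inner_right,
    Finset.mul_sum]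
  refine Finset.sum_le_sum fun i _ => ?_
  by_cases hi : i ∈ s
  · exact mul_le_mul_of_nonneg_right (hc i hi) (sq_nonneg _)
  · simp [(hT.eigenvectorBasis hn).inner_eq_zero_of_mem_span_image_s8 hx hi]

theorem re_inner_le_mul_norm_sq_of_mem_span {s : Set (Fin n)} {c : ℝ}
    (hc : ∀ i ∈ s, hT.eigenvalues hn i ≤ c) {x : E}
    (hx : x ∈ Submodule.span 𝕜 (hT.eigenvectorBasis hn '' s)) :
    re ⟪x, T x⟫_𝕜 ≤ c * ‖x‖ ^ 2 := by
  rw [hT.re_inner_apply_eq_sum hn, ← (hT.eigenvectorBasis hn).sum_sq_norm_inner_right,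
    Finset.mul_sum]
  refine Finset.sum_le_sum fun i _ => ?_
  by_cases hi : i ∈ s
  · exact mul_le_mul_of_nonneg_right (hc i hi) (sq_nonneg _)
  · simp [(hT.eigenvectorBasis hn).inner_eq_zero_of_mem_span_image_s8 hx hi]

theorem exists_finrank_eq_forall_eigenvalues_mul_le (j : Fin n) :
    ∃ S : Submodule 𝕜 E, finrank 𝕜 S = j + 1 ∧
      ∀ x ∈ S, hT.eigenvalues hn j * ‖x‖ ^ 2 ≤ re ⟪x, T x⟫_𝕜 :=
  ⟨_, by rw [OrthonormalBasis.finrank_span_image_s8, Fin.card_Iic], fun _ hx =>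
    hT.mul_norm_sq_le_re_inner_of_mem_span hn
      (fun _ hi => hT.eigenvalues_antitone hn (Finset.mem_Iic.1 hi)) hx⟩

theorem le_eigenvalues_of_forall_mul_le (j : Fin n) {S : Submodule 𝕜 E}
    (hS : j + 1 ≤ finrank 𝕜 S) {c : ℝ} (hc : ∀ x ∈ S, c * ‖x‖ ^ 2 ≤ re ⟪x, T x⟫_𝕜) :
    c ≤ hT.eigenvalues hn j := by
  set U := Submodule.span 𝕜 (hT.eigenvectorBasis hn '' (Finset.Ici j : Set (Fin n)))
  have hU : finrank 𝕜 U = n - j := by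
    rw [OrthonormalBasis.finrank_span_image_s8, Fin.card_Ici]
  obtain ⟨x, hxS, hxU, hx0⟩ : ∃ x ∈ S, x ∈ U ∧ x ≠ 0 := by
    by_contra! h
    have := Submodule.finrank_add_finrank_le_of_disjoint (Submodule.disjoint_def.2 h)
    omega
  have hle := (hc x hxS).trans <| hT.re_inner_le_mul_norm_sq_of_mem_span hn
    (fun i hi => hT.eigenvalues_antitone hn (Finset.mem_Ici.1 hi)) hxU
  exact le_of_mul_le_mul_right hle (by positivity)

end LinearMap.IsSymmetric

theorem LinearMap.one_sub_inv_eigenvalues_le_sqrt_eigenvalues [FiniteDimensional 𝕜 E]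
    {A B T P : E →ₗ[𝕜] E} (hT : T.IsSymmetric) (hP : P.IsSymmetric) {n : ℕ}
    (hn : finrank 𝕜 E = n) (hAB : (1 - A) ∘ₗ B = 1) (hTB : ∀ x, re ⟪x, T x⟫_𝕜 = re ⟪x, B x⟫_𝕜)
    (hPA : ∀ x, re ⟪x, P x⟫_𝕜 = ‖A x‖ ^ 2) (j : Fin n) (hj : 0 < hT.eigenvalues hn j) :
    1 - (hT.eigenvalues hn j)⁻¹ ≤ √(hP.eigenvalues hn j) := by
  set c := 1 - (hT.eigenvalues hn j)⁻¹
  rcases le_or_gt c 0 with hc | hc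
  · exact hc.trans (Real.sqrt_nonneg _)
  have hx : ∀ x, B x - A (B x) = x := fun x => by simpa using LinearMap.ext_iff.1 hAB x
  have hB : Function.Injective B := fun x y h => by rw [← hx x, ← hx y, h]
  obtain ⟨S, hSdim, hS⟩ := hT.exists_finrank_eq_forall_eigenvalues_mul_le hn j
  rw [Real.le_sqrt' hc]
  refine hP.le_eigenvalues_of_forall_mul_le hn j (S := S.map B)
    (by rw [← (Submodule.equivMapOfInjective B hB S).finrank_eq, hSdim]) ?_
  rintro _ ⟨x, hxS, rfl⟩
  have hBx : c * ‖B x‖ ≤ ‖A (B x)‖ := by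
    have := one_sub_inv_mul_norm_le_norm_sub hj ((hS x hxS).trans_eq (hTB x))
    rwa [sub_eq_of_eq_add' (eq_add_of_sub_eq (hx x))] at this
  rw [hPA, ← mul_pow]
  gcongr

end

namespace Matrix

variable {n : ℕ}

theorem eigDesc_eq_eigenvalues {A : Matrix (Fin n) (Fin n) ℂ} (hA : A.IsHermitian) (j : Fin n) :
    eigDesc hA j = (isSymmetric_toEuclideanLin_iff.2 hA).eigenvalues finrank_euclideanSpace
      (Fin.cast (Fintype.card_fin n).symm j) := by
  -- `hA.eigenvalues` is the antitone `eigenvalues₀` reindexed by an arbitrary bijection,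
  -- and `Tuple.sort` undoes any reindexing into a monotone tuple.
  set σ : Equiv.Perm (Fin n) :=
    Fin.revPerm.trans ((finCongr (Fintype.card_fin n).symm).trans
      (Fintype.equivOfCardEq (Fintype.card_fin _)))
  have hσ : hA.eigenvalues ∘ σ =
      hA.eigenvalues₀ ∘ Fin.cast (Fintype.card_fin n).symm ∘ Fin.rev := by
    ext k
    simp [σ, IsHermitian.eigenvalues]
  have hsort : hA.eigenvalues ∘ σ = hA.eigenvalues ∘ Tuple.sort hA.eigenvalues := by
    rw [Tuple.comp_sort_eq_comp_iff_monotone, hσ]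
    exact fun a b h => hA.eigenvalues₀_antitone (by simpa using h)
  rw [eigDesc, ← hsort, hσ]
  simp [IsHermitian.eigenvalues₀]

theorem eigDesc_eq_zero {A : Matrix (Fin n) (Fin n) ℂ} (hA : A.IsHermitian) (h : A = 0)
    (j : Fin n) : eigDesc hA j = 0 := by
  simp [eigDesc, hA.eigenvalues_eq_zero_iff.2 h]

theorem re_inner_toEuclideanLin_hermPart (M : Matrix (Fin n) (Fin n) ℂ)
    (x : EuclideanSpace ℂ (Fin n)) :
    re ⟪x, toEuclideanLin (hermPart M) x⟫_ℂ = re ⟪x, toEuclideanLin M x⟫_ℂ := by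
  rw [hermPart, map_smul, map_add, LinearMap.smul_apply, LinearMap.add_apply, inner_smul_right,
    inner_add_right, toEuclideanLin_conjTranspose_eq_adjoint, LinearMap.adjoint_inner_right,
    ← inner_conj_symm (toEuclideanLin M x) x, re_to_complex, re_to_complex, Complex.add_conj]
  simp

theorem re_inner_toEuclideanLin_conjTranspose_mul_self_s8 (M : Matrix (Fin n) (Fin n) ℂ)
    (x : EuclideanSpace ℂ (Fin n)) :
    re ⟪x, toEuclideanLin (Mᴴ * M) x⟫_ℂ = ‖toEuclideanLin M x‖ ^ 2 := by
  rw [toLpLin_mul_same, LinearMap.comp_apply, toEuclideanLin_conjTranspose_eq_adjoint,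
    LinearMap.adjoint_inner_right, inner_self_eq_norm_sq]

end Matrix

theorem stmt8 {n : ℕ} (A : Matrix (Fin n) (Fin n) ℂ) (hA : ∀ j, singVal A j < 1) (j : Fin n) :
    eigDesc (hermPart_isHermitian (1 - A)⁻¹) j ≤ 1 / (1 - singVal A j) := by
  set hH := hermPart_isHermitian (1 - A)⁻¹
  have hr := sub_pos.2 (hA j)
  rcases le_or_gt (eigDesc hH j) 0 with hnonpos | hpos
  · exact hnonpos.trans (by positivity)
  -- a singular `1 - A` would have the junk inverse `0`, whose Hermitian part has eigenvalues `0`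
  have hu : IsUnit (1 - A).det := by
    by_contra hu
    refine hpos.ne' (eigDesc_eq_zero hH ?_ j)
    simp [hermPart, nonsing_inv_apply_not_isUnit _ hu]
  have hAB : (1 - toEuclideanLin A) ∘ₗ toEuclideanLin (1 - A)⁻¹ = 1 := by
    simpa [Module.End.one_eq_id] using congrArg toEuclideanLin (mul_nonsing_inv _ hu)
  have key : 1 - (eigDesc hH j)⁻¹ ≤ singVal A j := by
    rw [singVal, eigDesc_eq_eigenvalues, eigDesc_eq_eigenvalues]
    exact LinearMap.one_sub_inv_eigenvalues_le_sqrt_eigenvalues _ _ _ hAB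
      (re_inner_toEuclideanLin_hermPart _) (re_inner_toEuclideanLin_conjTranspose_mul_self_s8 A) _
      (eigDesc_eq_eigenvalues hH j ▸ hpos)
  rw [le_div_iff₀ hr]
  calc eigDesc hH j * (1 - singVal A j) ≤ eigDesc hH j * (eigDesc hH j)⁻¹ := by gcongr; linarith
    _ = 1 := mul_inv_cancel₀ hpos.ne'
end

section
/- Let A be an n×n strict contraction with largest singular value r_1 < 1. Then ((1−r_1)/(1+r_1))·(I−A*)(I−A) ≤ I−A*A ≤ ((1+r_1)/(1−r_1))·(I−A*)(I−A) in the Loewner order. -/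
/-!
Write `r` for the largest singular value, so that `‖A x‖ ≤ r ‖x‖`. At a vector `x`, with
`y = A x`, the quadratic forms of `I - A*A` and `(I - A*)(I - A)` are `‖x‖² - ‖y‖²` and
`‖x - y‖²`. Both inequalities then follow from `‖x‖ - ‖y‖ ≤ ‖x - y‖ ≤ ‖x‖ + ‖y‖` and
`(1 - r)(‖x‖ + ‖y‖) ≤ (1 + r)(‖x‖ - ‖y‖)`, a rearrangement of `‖y‖ ≤ r ‖x‖`.
-/

open Matrix
open scoped ComplexOrder

section NormInequalities

variable {E : Type*} [SeminormedAddCommGroup E] {x y : E} {r : ℝ}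

theorem one_sub_div_one_add_mul_norm_sub_sq_le (hr₀ : 0 ≤ r) (hr₁ : r < 1)
    (hy : ‖y‖ ≤ r * ‖x‖) : (1 - r) / (1 + r) * ‖x - y‖ ^ 2 ≤ ‖x‖ ^ 2 - ‖y‖ ^ 2 := by
  have hd : ‖x - y‖ ≤ ‖x‖ + ‖y‖ := norm_sub_le x y
  rw [div_mul_eq_mul_div, div_le_iff₀ (by linarith)]
  nlinarith [norm_nonneg (x - y), norm_nonneg y,
    mul_le_mul hd hd (norm_nonneg _) (by positivity)]

theorem norm_sq_sub_norm_sq_le_one_add_div_one_sub_mul (hr₀ : 0 ≤ r) (hr₁ : r < 1)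
    (hy : ‖y‖ ≤ r * ‖x‖) : ‖x‖ ^ 2 - ‖y‖ ^ 2 ≤ (1 + r) / (1 - r) * ‖x - y‖ ^ 2 := by
  have hd : ‖x‖ - ‖y‖ ≤ ‖x - y‖ := norm_sub_norm_le x y
  have hyx : ‖y‖ ≤ ‖x‖ := hy.trans (by nlinarith [norm_nonneg x])
  rw [div_mul_eq_mul_div, le_div_iff₀ (by linarith)]
  nlinarith [mul_le_mul hd hd (by linarith) (norm_nonneg _)]

end NormInequalities

section QuadraticForms

variable {𝕜 m n : Type*} [RCLike 𝕜] [Fintype m] [Fintype n]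

theorem star_dotProduct_conjTranspose_mul_mulVec (B : Matrix m n 𝕜) (x : n → 𝕜) :
    star x ⬝ᵥ ((Bᴴ * B) *ᵥ x) = ((‖WithLp.toLp 2 (B *ᵥ x)‖ ^ 2 : ℝ) : 𝕜) := by
  rw [← mulVec_mulVec, dotProduct_mulVec, ← star_mulVec, dotProduct_comm,
    ← EuclideanSpace.inner_toLp_toLp]
  simp

theorem star_dotProduct_self (x : n → 𝕜) :
    star x ⬝ᵥ x = ((‖WithLp.toLp 2 x‖ ^ 2 : ℝ) : 𝕜) := by
  rw [dotProduct_comm, ← EuclideanSpace.inner_toLp_toLp]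
  simp

theorem posSemidef_sub_of_forall_le {P Q : Matrix n n 𝕜} (hP : P.IsHermitian)
    (hQ : Q.IsHermitian) (h : ∀ x, star x ⬝ᵥ (Q *ᵥ x) ≤ star x ⬝ᵥ (P *ᵥ x)) :
    (P - Q).PosSemidef :=
  .of_dotProduct_mulVec_nonneg (hP.sub hQ) fun x ↦ by
    rw [sub_mulVec, dotProduct_sub, sub_nonneg]
    exact h x

end QuadraticForms

section TopSingularValue

open scoped MatrixOrder

variable {n : ℕ} (hn : 0 < n)

theorem eigenvalues_le_eigDesc_zero {A : Matrix (Fin n) (Fin n) ℂ} (hA : A.IsHermitian)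
    (i : Fin n) : hA.eigenvalues i ≤ eigDesc hA ⟨0, hn⟩ := by
  have hi : hA.eigenvalues i =
      (hA.eigenvalues ∘ Tuple.sort hA.eigenvalues) ((Tuple.sort hA.eigenvalues)⁻¹ i) := by
    simp
  rw [hi]
  apply Tuple.monotone_sort
  simp only [Fin.le_def, Fin.val_rev]
  omega

theorem singVal_sq (A : Matrix (Fin n) (Fin n) ℂ) (j : Fin n) :
    singVal A j ^ 2 = eigDesc (posSemidef_conjTranspose_mul_self A).isHermitian j :=
  Real.sq_sqrt ((posSemidef_conjTranspose_mul_self A).eigenvalues_nonneg _)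

theorem conjTranspose_mul_self_le_singVal_zero_sq (A : Matrix (Fin n) (Fin n) ℂ) :
    Aᴴ * A ≤ algebraMap ℝ _ (singVal A ⟨0, hn⟩ ^ 2) := by
  have hH := (posSemidef_conjTranspose_mul_self A).isHermitian
  refine le_algebraMap_of_spectrum_le ?_ hH.isSelfAdjoint
  rw [hH.spectrum_real_eq_range_eigenvalues, singVal_sq]
  rintro _ ⟨i, rfl⟩
  exact eigenvalues_le_eigDesc_zero hn hH i

theorem norm_mulVec_le_singVal_zero_mul (A : Matrix (Fin n) (Fin n) ℂ) (x : Fin n → ℂ) :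
    ‖WithLp.toLp 2 (A *ᵥ x)‖ ≤ singVal A ⟨0, hn⟩ * ‖WithLp.toLp 2 x‖ := by
  have h :=
    (le_iff.mp (conjTranspose_mul_self_le_singVal_zero_sq hn A)).dotProduct_mulVec_nonneg x
  rw [sub_mulVec, dotProduct_sub, sub_nonneg, Algebra.algebraMap_eq_smul_one, smul_mulVec,
    one_mulVec, dotProduct_smul, star_dotProduct_self,
    star_dotProduct_conjTranspose_mul_mulVec] at h
  have h' : ‖WithLp.toLp 2 (A *ᵥ x)‖ ^ 2 ≤ (singVal A ⟨0, hn⟩ * ‖WithLp.toLp 2 x‖) ^ 2 := by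
    rw [mul_pow]
    exact_mod_cast h
  exact (pow_le_pow_iff_left₀ (norm_nonneg _) (mul_nonneg (Real.sqrt_nonneg _) (norm_nonneg _))
    two_ne_zero).mp h'

end TopSingularValue

theorem stmt12 {n : ℕ} (hn : 0 < n) (A : Matrix (Fin n) (Fin n) ℂ) (hA : ∀ j, singVal A j < 1) :
    ((1 - Aᴴ * A) -
        (((1 - singVal A ⟨0, hn⟩) / (1 + singVal A ⟨0, hn⟩) : ℝ) : ℂ) •
          ((1 - Aᴴ) * (1 - A))).PosSemidef ∧
      ((((1 + singVal A ⟨0, hn⟩) / (1 - singVal A ⟨0, hn⟩) : ℝ) : ℂ) •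
          ((1 - Aᴴ) * (1 - A)) - (1 - Aᴴ * A)).PosSemidef := by
  have hr₀ : 0 ≤ singVal A ⟨0, hn⟩ := Real.sqrt_nonneg _
  have hAx := norm_mulVec_le_singVal_zero_mul hn A
  have hgap_eq : (1 - Aᴴ) * (1 - A) = (1 - A)ᴴ * (1 - A) := by
    rw [conjTranspose_sub, conjTranspose_one]
  have hdefect : (1 - Aᴴ * A).IsHermitian :=
    isHermitian_one.sub (isHermitian_conjTranspose_mul_self A)
  have hgap (c : ℝ) : ((c : ℂ) • ((1 - Aᴴ) * (1 - A))).IsHermitian := by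
    rw [hgap_eq]
    exact (isHermitian_conjTranspose_mul_self _).smul (Complex.conj_ofReal c)
  have hdefect_form (x : Fin n → ℂ) : star x ⬝ᵥ ((1 - Aᴴ * A) *ᵥ x) =
      ((‖WithLp.toLp 2 x‖ ^ 2 - ‖WithLp.toLp 2 (A *ᵥ x)‖ ^ 2 : ℝ) : ℂ) := by
    rw [sub_mulVec, one_mulVec, dotProduct_sub, star_dotProduct_self,
      star_dotProduct_conjTranspose_mul_mulVec, RCLike.ofReal_eq_complex_ofReal,
      Complex.ofReal_sub]
  have hgap_form (c : ℝ) (x : Fin n → ℂ) :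
      star x ⬝ᵥ (((c : ℂ) • ((1 - Aᴴ) * (1 - A))) *ᵥ x) =
        ((c * ‖WithLp.toLp 2 x - WithLp.toLp 2 (A *ᵥ x)‖ ^ 2 : ℝ) : ℂ) := by
    rw [hgap_eq, smul_mulVec, dotProduct_smul,
      star_dotProduct_conjTranspose_mul_mulVec, sub_mulVec, one_mulVec, WithLp.toLp_sub,
      smul_eq_mul, RCLike.ofReal_eq_complex_ofReal, Complex.ofReal_mul]
  constructor
  · refine posSemidef_sub_of_forall_le hdefect (hgap _) fun x ↦ ?_
    rw [hdefect_form, hgap_form, Complex.real_le_real]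
    exact one_sub_div_one_add_mul_norm_sub_sq_le hr₀ (hA _) (hAx x)
  · refine posSemidef_sub_of_forall_le (hgap _) hdefect fun x ↦ ?_
    rw [hdefect_form, hgap_form, Complex.real_le_real]
    exact norm_sq_sub_norm_sq_le_one_add_div_one_sub_mul hr₀ (hA _) (hAx x)
end

section
/- Let A, B be n×n strict contractions with Cayley transforms C(A) = (A−iI)(A+iI)⁻¹ and C(B) = (B−iI)(B+iI)⁻¹. Then C(A) − C(B) = 2i(B+iI)⁻¹(A−B)(A+iI)⁻¹, and for each j = 1,…,n, σ_j(C(A)−C(B)) ≤ 2σ_j(A−B)/((1−σ_1(A))(1−σ_1(B))). -/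
open Matrix
open scoped ComplexOrder

/-!
Write `S_X = X + iI`. Since `X - iI = S_X - 2iI`, the Cayley transform is `1 - 2i S_X⁻¹`, so
`C(A) - C(B) = 2i (S_B⁻¹ - S_A⁻¹) = 2i S_B⁻¹ (A - B) S_A⁻¹`.
The estimate follows from `σ_j(XMY) ≤ σ_1(X) σ_j(M) σ_1(Y)` together with
`σ_1(S_A⁻¹) ≤ 1 / (1 - σ_1(A))`, which holds because `‖S_A v‖ ≥ ‖v‖ - ‖A v‖`
(`σ_1` is `singVal · ⟨0, _⟩`).
The product inequality comes from the Courant–Fischer principle: `σ_j(M) ≤ c` as soon as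
`‖M v‖ ≤ c ‖v‖` on some subspace of codimension `j`.
-/

open Module
open scoped InnerProductSpace

namespace Module.Basis

variable {ι K V : Type*} [Field K] [AddCommGroup V] [Module K V] (b : Basis ι K V)

noncomputable def coordsVanishingOn (s : Finset ι) : Submodule K V :=
  LinearMap.ker (LinearMap.pi fun k : s => b.coord k)

variable {b} in
lemma mem_coordsVanishingOn {s : Finset ι} {v : V} :
    v ∈ b.coordsVanishingOn s ↔ ∀ k ∈ s, b.repr v k = 0 := by
  simp [coordsVanishingOn, funext_iff]

variable [FiniteDimensional K V]

lemma finrank_le_finrank_coordsVanishingOn_add (s : Finset ι) :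
    finrank K V ≤ finrank K (b.coordsVanishingOn s) + s.card := by
  have hrank := LinearMap.finrank_range_add_finrank_ker (LinearMap.pi fun k : s => b.coord k)
  have hrange := Submodule.finrank_le (LinearMap.range (LinearMap.pi fun k : s => b.coord k))
  rw [finrank_fintype_fun_eq_card, Fintype.card_coe] at hrange
  rw [coordsVanishingOn]
  omega

lemma exists_mem_ne_zero_repr_eq_zero {s : Finset ι} {W : Submodule K V}
    (hW : s.card < finrank K W) : ∃ v ∈ W, v ≠ 0 ∧ ∀ k ∈ s, b.repr v k = 0 := by
  by_contra h
  have := Submodule.finrank_add_finrank_le_of_disjoint <| Submodule.disjoint_def.2 fun v hvW hv ↦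
    by_contra fun hv0 ↦ h ⟨v, hvW, hv0, mem_coordsVanishingOn.1 hv⟩
  have := b.finrank_le_finrank_coordsVanishingOn_add s
  omega

end Module.Basis

lemma eigDesc_antitone {n : ℕ} {A : Matrix (Fin n) (Fin n) ℂ} (hA : A.IsHermitian) :
    Antitone (eigDesc hA) :=
  fun _ _ hij ↦ Tuple.monotone_sort hA.eigenvalues (Fin.rev_le_rev.2 hij)

namespace Matrix.IsHermitian

variable {n : ℕ} {A : Matrix (Fin n) (Fin n) ℂ} (hA : A.IsHermitian)

noncomputable def descPerm : Equiv.Perm (Fin n) :=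
  Fin.revPerm.trans (Tuple.sort hA.eigenvalues)

noncomputable def descBasis : OrthonormalBasis (Fin n) ℂ (EuclideanSpace ℂ (Fin n)) :=
  hA.eigenvectorBasis.reindex hA.descPerm.symm

lemma toEuclideanLin_descBasis (j : Fin n) :
    toEuclideanLin A (hA.descBasis j) = (eigDesc hA j : ℂ) • hA.descBasis j := by
  have h := hA.mulVec_eigenvectorBasis (hA.descPerm j)
  simp only [descBasis, OrthonormalBasis.reindex_apply, Equiv.symm_symm]
  ext i
  simpa [toLpLin_apply, Complex.real_smul, eigDesc, descPerm] using congrFun h i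

lemma repr_toEuclideanLin (v : EuclideanSpace ℂ (Fin n)) (k : Fin n) :
    hA.descBasis.repr (toEuclideanLin A v) k = eigDesc hA k * hA.descBasis.repr v k := by
  rw [OrthonormalBasis.repr_apply_apply, OrthonormalBasis.repr_apply_apply,
    ← isSymmetric_toEuclideanLin_iff.2 hA, toEuclideanLin_descBasis, inner_smul_left,
    Complex.conj_ofReal]

lemma re_inner_toEuclideanLin (v : EuclideanSpace ℂ (Fin n)) :
    RCLike.re ⟪v, toEuclideanLin A v⟫_ℂ = ∑ k, eigDesc hA k * ‖hA.descBasis.repr v k‖ ^ 2 := by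
  rw [← hA.descBasis.repr.inner_map_map, PiLp.inner_apply, map_sum]
  refine Finset.sum_congr rfl fun k _ ↦ ?_
  rw [repr_toEuclideanLin, RCLike.inner_apply, mul_assoc, Complex.mul_conj']
  norm_cast

lemma re_inner_toEuclideanLin_le {j : Fin n} {v : EuclideanSpace ℂ (Fin n)}
    (hv : ∀ k < j, hA.descBasis.repr v k = 0) :
    RCLike.re ⟪v, toEuclideanLin A v⟫_ℂ ≤ eigDesc hA j * ‖v‖ ^ 2 := by
  rw [re_inner_toEuclideanLin, ← hA.descBasis.repr.norm_map, EuclideanSpace.norm_sq_eq,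
    Finset.mul_sum]
  refine Finset.sum_le_sum fun k _ ↦ ?_
  rcases lt_or_ge k j with hk | hk
  · simp [hv k hk]
  · exact mul_le_mul_of_nonneg_right (eigDesc_antitone hA hk) (sq_nonneg _)

lemma le_re_inner_toEuclideanLin {j : Fin n} {v : EuclideanSpace ℂ (Fin n)}
    (hv : ∀ k, j < k → hA.descBasis.repr v k = 0) :
    eigDesc hA j * ‖v‖ ^ 2 ≤ RCLike.re ⟪v, toEuclideanLin A v⟫_ℂ := by
  rw [re_inner_toEuclideanLin, ← hA.descBasis.repr.norm_map, EuclideanSpace.norm_sq_eq,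
    Finset.mul_sum]
  refine Finset.sum_le_sum fun k _ ↦ ?_
  rcases lt_or_ge j k with hk | hk
  · simp [hv k hk]
  · exact mul_le_mul_of_nonneg_right (eigDesc_antitone hA hk) (sq_nonneg _)

end Matrix.IsHermitian

section SingularValues

variable {n : ℕ}

lemma singVal_nonneg (M : Matrix (Fin n) (Fin n) ℂ) (j : Fin n) : 0 ≤ singVal M j :=
  Real.sqrt_nonneg _

lemma sq_singVal (M : Matrix (Fin n) (Fin n) ℂ) (j : Fin n) :
    singVal M j ^ 2 = eigDesc (posSemidef_conjTranspose_mul_self M).isHermitian j :=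
  Real.sq_sqrt ((posSemidef_conjTranspose_mul_self M).eigenvalues_nonneg _)

lemma re_inner_toEuclideanLin_conjTranspose_mul_self (M : Matrix (Fin n) (Fin n) ℂ)
    (v : EuclideanSpace ℂ (Fin n)) :
    RCLike.re ⟪v, toEuclideanLin (Mᴴ * M) v⟫_ℂ = ‖toEuclideanLin M v‖ ^ 2 := by
  rw [toLpLin_mul_same, LinearMap.comp_apply, toEuclideanLin_conjTranspose_eq_adjoint,
    LinearMap.adjoint_inner_right, inner_self_eq_norm_sq]

-- The span of the right singular vectors of `M` from the `j`-th one on.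
noncomputable def singTailSpace (M : Matrix (Fin n) (Fin n) ℂ) (j : Fin n) :
    Submodule ℂ (EuclideanSpace ℂ (Fin n)) :=
  (posSemidef_conjTranspose_mul_self M).isHermitian.descBasis.toBasis.coordsVanishingOn
    (Finset.Iio j)

lemma le_finrank_singTailSpace_add (M : Matrix (Fin n) (Fin n) ℂ) (j : Fin n) :
    n ≤ finrank ℂ (singTailSpace M j) + j := by
  have h := (posSemidef_conjTranspose_mul_self M).isHermitian.descBasis.toBasis
    |>.finrank_le_finrank_coordsVanishingOn_add (Finset.Iio j)
  rwa [finrank_euclideanSpace_fin, Fin.card_Iio] at h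

lemma norm_toEuclideanLin_le_of_mem_singTailSpace (M : Matrix (Fin n) (Fin n) ℂ) {j : Fin n}
    {v : EuclideanSpace ℂ (Fin n)} (hv : v ∈ singTailSpace M j) :
    ‖toEuclideanLin M v‖ ≤ singVal M j * ‖v‖ := by
  have hvan := Basis.mem_coordsVanishingOn.1 hv
  have hsq : ‖toEuclideanLin M v‖ ^ 2 ≤ (singVal M j * ‖v‖) ^ 2 := by
    rw [← re_inner_toEuclideanLin_conjTranspose_mul_self, mul_pow, sq_singVal]
    exact IsHermitian.re_inner_toEuclideanLin_le _ fun k hk ↦ by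
      simpa using hvan k (Finset.mem_Iio.2 hk)
  exact (pow_le_pow_iff_left₀ (norm_nonneg _)
    (mul_nonneg (singVal_nonneg M j) (norm_nonneg v)) two_ne_zero).1 hsq

lemma norm_toEuclideanLin_le (M : Matrix (Fin n) (Fin n) ℂ) (hn : 0 < n)
    (v : EuclideanSpace ℂ (Fin n)) :
    ‖toEuclideanLin M v‖ ≤ singVal M ⟨0, hn⟩ * ‖v‖ :=
  norm_toEuclideanLin_le_of_mem_singTailSpace M <| Basis.mem_coordsVanishingOn.2 fun k hk ↦
    absurd (Finset.mem_Iio.1 hk) (Nat.not_lt_zero k)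

lemma singVal_le_of_forall_norm_le (M : Matrix (Fin n) (Fin n) ℂ) (j : Fin n)
    {W : Submodule ℂ (EuclideanSpace ℂ (Fin n))} (hW : n ≤ finrank ℂ W + j) {c : ℝ} (hc : 0 ≤ c)
    (h : ∀ v ∈ W, ‖toEuclideanLin M v‖ ≤ c * ‖v‖) : singVal M j ≤ c := by
  -- `W` meets the span of the first `j + 1` right singular vectors of `M` nontrivially.
  have hM := (posSemidef_conjTranspose_mul_self M).isHermitian
  obtain ⟨v, hvW, hv0, hvan⟩ := hM.descBasis.toBasis.exists_mem_ne_zero_repr_eq_zero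
    (s := Finset.Ioi j) (W := W) (by rw [Fin.card_Ioi]; omega)
  have key : eigDesc hM j * ‖v‖ ^ 2 ≤ c ^ 2 * ‖v‖ ^ 2 := calc
    _ ≤ RCLike.re ⟪v, toEuclideanLin (Mᴴ * M) v⟫_ℂ :=
      hM.le_re_inner_toEuclideanLin fun k hk ↦ by simpa using hvan k (Finset.mem_Ioi.2 hk)
    _ = ‖toEuclideanLin M v‖ ^ 2 := re_inner_toEuclideanLin_conjTranspose_mul_self M v
    _ ≤ (c * ‖v‖) ^ 2 := pow_le_pow_left₀ (norm_nonneg _) (h v hvW) 2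
    _ = c ^ 2 * ‖v‖ ^ 2 := mul_pow ..
  exact (Real.sqrt_le_left hc).2 (le_of_mul_le_mul_right key (by positivity))

end SingularValues

section SingularValueInequalities

variable {n : ℕ}

lemma singVal_smul_le (c : ℂ) (M : Matrix (Fin n) (Fin n) ℂ) (j : Fin n) :
    singVal (c • M) j ≤ ‖c‖ * singVal M j := by
  refine singVal_le_of_forall_norm_le _ j (le_finrank_singTailSpace_add M j)
    (mul_nonneg (norm_nonneg c) (singVal_nonneg M j)) fun v hv ↦ ?_
  rw [map_smul, LinearMap.smul_apply, norm_smul, mul_assoc]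
  exact mul_le_mul_of_nonneg_left (norm_toEuclideanLin_le_of_mem_singTailSpace M hv)
    (norm_nonneg c)

lemma singVal_mul_le_left (X M : Matrix (Fin n) (Fin n) ℂ) (j : Fin n) :
    singVal (X * M) j ≤ singVal X ⟨0, j.pos⟩ * singVal M j := by
  refine singVal_le_of_forall_norm_le _ j (le_finrank_singTailSpace_add M j)
    (mul_nonneg (singVal_nonneg _ _) (singVal_nonneg _ _)) fun v hv ↦ ?_
  calc ‖toEuclideanLin (X * M) v‖ = ‖toEuclideanLin X (toEuclideanLin M v)‖ := by
        rw [toLpLin_mul_same, LinearMap.comp_apply]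
    _ ≤ singVal X ⟨0, j.pos⟩ * ‖toEuclideanLin M v‖ := norm_toEuclideanLin_le X j.pos _
    _ ≤ singVal X ⟨0, j.pos⟩ * (singVal M j * ‖v‖) := mul_le_mul_of_nonneg_left
        (norm_toEuclideanLin_le_of_mem_singTailSpace M hv) (singVal_nonneg _ _)
    _ = _ := (mul_assoc ..).symm

lemma singVal_mul_le_right (M X : Matrix (Fin n) (Fin n) ℂ) (hX : IsUnit X) (j : Fin n) :
    singVal (M * X) j ≤ singVal M j * singVal X ⟨0, j.pos⟩ := by
  have hinv : Function.LeftInverse (toEuclideanLin X) (toEuclideanLin X⁻¹) := fun w ↦ by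
    rw [← LinearMap.comp_apply, ← toLpLin_mul_same,
      mul_nonsing_inv X ((isUnit_iff_isUnit_det X).1 hX), toLpLin_one, LinearMap.id_apply]
  have hW : n ≤ finrank ℂ ((singTailSpace M j).map (toEuclideanLin X⁻¹)) + j := by
    rw [← (Submodule.equivMapOfInjective _ hinv.injective _).finrank_eq]
    exact le_finrank_singTailSpace_add M j
  refine singVal_le_of_forall_norm_le _ j hW
    (mul_nonneg (singVal_nonneg _ _) (singVal_nonneg _ _)) ?_
  rintro _ ⟨w, hw, rfl⟩
  calc ‖toEuclideanLin (M * X) (toEuclideanLin X⁻¹ w)‖ = ‖toEuclideanLin M w‖ := by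
        rw [toLpLin_mul_same, LinearMap.comp_apply, hinv w]
    _ ≤ singVal M j * ‖toEuclideanLin X (toEuclideanLin X⁻¹ w)‖ := by
        rw [hinv w]; exact norm_toEuclideanLin_le_of_mem_singTailSpace M hw
    _ ≤ singVal M j * (singVal X ⟨0, j.pos⟩ * ‖toEuclideanLin X⁻¹ w‖) :=
        mul_le_mul_of_nonneg_left (norm_toEuclideanLin_le X j.pos _) (singVal_nonneg _ _)
    _ = _ := (mul_assoc ..).symm

lemma singVal_mul_mul_le (X M Y : Matrix (Fin n) (Fin n) ℂ) (hY : IsUnit Y) (j : Fin n) :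
    singVal (X * M * Y) j ≤ singVal X ⟨0, j.pos⟩ * singVal M j * singVal Y ⟨0, j.pos⟩ :=
  (singVal_mul_le_right _ Y hY j).trans <|
    mul_le_mul_of_nonneg_right (singVal_mul_le_left X M j) (singVal_nonneg _ _)

lemma le_norm_toEuclideanLin_add_smul_one (A : Matrix (Fin n) (Fin n) ℂ) (hn : 0 < n) (c : ℂ)
    (v : EuclideanSpace ℂ (Fin n)) :
    (‖c‖ - singVal A ⟨0, hn⟩) * ‖v‖ ≤ ‖toEuclideanLin (A + c • 1) v‖ := by
  have hsplit : toEuclideanLin (A + c • 1) v = toEuclideanLin A v + c • v := by simp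
  have htri : ‖c‖ * ‖v‖ ≤ ‖toEuclideanLin A v + c • v‖ + ‖toEuclideanLin A v‖ := by
    simpa [norm_smul] using norm_sub_le (toEuclideanLin A v + c • v) (toEuclideanLin A v)
  rw [hsplit]
  linarith [norm_toEuclideanLin_le A hn v]

lemma isUnit_add_smul_one (A : Matrix (Fin n) (Fin n) ℂ) (hn : 0 < n) {c : ℂ}
    (hc : singVal A ⟨0, hn⟩ < ‖c‖) : IsUnit (A + c • 1) := by
  refine (isUnit_map_iff (toLpLinAlgEquiv 2) _).1 ((LinearMap.isUnit_iff_ker_eq_bot _).2 ?_)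
  refine LinearMap.ker_eq_bot'.2 fun v hv ↦ norm_le_zero_iff.1 ?_
  have hv' : toEuclideanLin (A + c • 1) v = 0 := hv
  have hbound := le_norm_toEuclideanLin_add_smul_one A hn c v
  rw [hv', norm_zero] at hbound
  exact nonpos_of_mul_nonpos_right hbound (sub_pos.2 hc)

lemma singVal_inv_add_smul_one_le (A : Matrix (Fin n) (Fin n) ℂ) (hn : 0 < n) {c : ℂ}
    (hc : singVal A ⟨0, hn⟩ < ‖c‖) :
    singVal (A + c • 1)⁻¹ ⟨0, hn⟩ ≤ (‖c‖ - singVal A ⟨0, hn⟩)⁻¹ := by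
  have hgap : 0 < ‖c‖ - singVal A ⟨0, hn⟩ := sub_pos.2 hc
  have hS := mul_nonsing_inv _ ((isUnit_iff_isUnit_det _).1 (isUnit_add_smul_one A hn hc))
  refine singVal_le_of_forall_norm_le _ _ (W := ⊤) (by simp) (inv_nonneg.2 hgap.le)
    fun v _ ↦ ?_
  rw [← div_eq_inv_mul, le_div_iff₀' hgap]
  calc (‖c‖ - singVal A ⟨0, hn⟩) * ‖toEuclideanLin (A + c • 1)⁻¹ v‖
      ≤ ‖toEuclideanLin (A + c • 1) (toEuclideanLin (A + c • 1)⁻¹ v)‖ :=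
        le_norm_toEuclideanLin_add_smul_one A hn c _
    _ = ‖v‖ := by
        rw [← LinearMap.comp_apply, ← toLpLin_mul_same, hS, toLpLin_one, LinearMap.id_apply]

end SingularValueInequalities

lemma cayley_sub_cayley {ι R : Type*} [Fintype ι] [DecidableEq ι] [CommRing R]
    {A B : Matrix ι ι R} {c : R} (hA : IsUnit (A + c • 1)) (hB : IsUnit (B + c • 1)) :
    (A - c • 1) * (A + c • 1)⁻¹ - (B - c • 1) * (B + c • 1)⁻¹ =
      (2 * c) • ((B + c • 1)⁻¹ * (A - B) * (A + c • 1)⁻¹) := by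
  have hcayley {X : Matrix ι ι R} (hX : IsUnit (X + c • 1)) :
      (X - c • 1) * (X + c • 1)⁻¹ = 1 - (2 * c) • (X + c • 1)⁻¹ := by
    rw [show X - c • 1 = X + c • 1 - (2 * c) • 1 by module, sub_mul,
      mul_nonsing_inv _ ((isUnit_iff_isUnit_det _).1 hX), smul_mul, one_mul]
  rw [hcayley hA, hcayley hB, sub_sub_sub_cancel_left, ← smul_sub,
    inv_sub_inv (iff_of_true hB hA), add_sub_add_right_eq_sub]

theorem stmt18 {n : ℕ} (A B : Matrix (Fin n) (Fin n) ℂ) (hA : ∀ j, singVal A j < 1)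
    (hB : ∀ j, singVal B j < 1) :
    (A - Complex.I • 1) * (A + Complex.I • 1)⁻¹ -
        (B - Complex.I • 1) * (B + Complex.I • 1)⁻¹ =
      (2 * Complex.I) • ((B + Complex.I • 1)⁻¹ * (A - B) * (A + Complex.I • 1)⁻¹) ∧
    ∀ j : Fin n,
      singVal ((A - Complex.I • 1) * (A + Complex.I • 1)⁻¹ -
          (B - Complex.I • 1) * (B + Complex.I • 1)⁻¹) j ≤
        2 * singVal (A - B) j /
          ((1 - singVal A ⟨0, j.pos⟩) * (1 - singVal B ⟨0, j.pos⟩)) := by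
  rcases Nat.eq_zero_or_pos n with rfl | hn
  · exact ⟨Subsingleton.elim _ _, fun j ↦ j.elim0⟩
  have hA0 : singVal A ⟨0, hn⟩ < ‖Complex.I‖ := by simpa using hA ⟨0, hn⟩
  have hB0 : singVal B ⟨0, hn⟩ < ‖Complex.I‖ := by simpa using hB ⟨0, hn⟩
  have hdiff := cayley_sub_cayley (isUnit_add_smul_one A hn hA0) (isUnit_add_smul_one B hn hB0)
  refine ⟨hdiff, fun j ↦ ?_⟩
  have hQ : IsUnit (A + Complex.I • 1)⁻¹ :=
    isUnit_nonsing_inv_iff.2 (isUnit_add_smul_one A hn hA0)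
  have hinvA := singVal_inv_add_smul_one_le A hn hA0
  have hinvB := singVal_inv_add_smul_one_le B hn hB0
  rw [Complex.norm_I] at hinvA hinvB
  rw [hdiff]
  calc _ ≤ ‖2 * Complex.I‖ *
          singVal ((B + Complex.I • 1)⁻¹ * (A - B) * (A + Complex.I • 1)⁻¹) j :=
        singVal_smul_le _ _ j
    _ ≤ 2 * (singVal (B + Complex.I • 1)⁻¹ ⟨0, hn⟩ * singVal (A - B) j *
          singVal (A + Complex.I • 1)⁻¹ ⟨0, hn⟩) := by
        simpa using singVal_mul_mul_le _ (A - B) _ hQ j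
    _ ≤ 2 * ((1 - singVal B ⟨0, hn⟩)⁻¹ * singVal (A - B) j * (1 - singVal A ⟨0, hn⟩)⁻¹) := by
        gcongr
        · exact singVal_nonneg _ _
        · exact mul_nonneg (inv_nonneg.2 (sub_nonneg.2 (hB _).le)) (singVal_nonneg _ _)
        · exact singVal_nonneg _ _
    _ = _ := by rw [div_eq_mul_inv, mul_inv]; ring
end
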